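/- arXiv:1805.02057 — 2 statements merged into one kernel-verified Lean document; each statement's English description precedes it below -/
import Mathlib

section
/- Let Δ⁺ be the set of positive roots of a simple root system with simple roots Π. If γ ∈ Δ⁺ and α, β ∈ Π are distinct simple roots such that γ + α and γ + β are both positive roots, then γ + α + β is also a positive root. -/
open scoped RealInnerProductSpace

/-- Combinatorial data of the set of positive roots of a (reduced, irreducible,
crystallographic) root system of a simple Lie algebra, with a chosen set of
simple roots, sitting in a real inner product space `V`. -/
structure SimpleRS (V : Type*) [NormedAddCommGroup V] [InnerProductSpace ℝ V] where
  /-- the positive roots Δ⁺ -/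
  pos : Finset V
  /-- the simple roots Π -/
  simple : Finset V
  simple_sub : simple ⊆ pos
  indep : LinearIndependent ℝ (fun α : {x // x ∈ simple} => (α : V))
  root_ne : ∀ γ ∈ pos, γ ≠ (0 : V)
  /-- `coeff γ α` is the coefficient of the simple root `α` in `γ` -/
  coeff : V → V → ℕ
  coeff_spec : ∀ γ ∈ pos, γ = ∑ α ∈ simple, (coeff γ α : ℝ) • α
  /-- the reflection of a root in a root is again a root (positive or negative) -/
  reflect_mem : ∀ α ∈ pos, ∀ γ ∈ pos,
    (γ - (2 * ⟪γ, α⟫ / ⟪α, α⟫) • α ∈ pos ∨ -(γ - (2 * ⟪γ, α⟫ / ⟪α, α⟫) • α) ∈ pos)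
  crystallographic : ∀ α ∈ pos, ∀ γ ∈ pos, ∃ z : ℤ, 2 * ⟪γ, α⟫ / ⟪α, α⟫ = (z : ℝ)
  reduced : ∀ α ∈ pos, (2 : ℝ) • α ∉ pos
  /-- irreducibility: the Dynkin diagram is connected -/
  irreducible : ∀ S ⊆ simple, (∀ α ∈ S, ∀ β ∈ simple, β ∉ S → ⟪α, β⟫ = 0) →
      S = ∅ ∨ S = simple
  /-- the highest root θ -/
  highest : V
  highest_mem : highest ∈ pos
  highest_spec : ∀ γ ∈ pos, ∃ c : V → ℕ, highest - γ = ∑ α ∈ simple, (c α : ℝ) • α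

namespace SimpleRS

variable {V : Type*} [NormedAddCommGroup V] [InnerProductSpace ℝ V] (R : SimpleRS V)

/-- the root order: `μ ≼ ν` iff `ν − μ` is a nonnegative integral combination
of simple roots -/
def rle (μ ν : V) : Prop := ∃ c : V → ℕ, ν - μ = ∑ α ∈ R.simple, (c α : ℝ) • α

/-- the support of a root: simple roots occurring with nonzero coefficient -/
def supp (γ : V) : Set V := {α | α ∈ R.simple ∧ R.coeff γ α ≠ 0}

/-- the height of a root -/
def ht (γ : V) : ℕ := ∑ α ∈ R.simple, R.coeff γ α

/-- the root system is of type `A_n`: its Dynkin diagram is a simply laced chain -/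
def IsTypeA : Prop :=
  ∃ (n : ℕ) (e : Fin n ≃ {x // x ∈ R.simple}),
    (∀ i j : Fin n, ⟪(e i : V), (e j : V)⟫ ≠ 0 ↔ ((i : ℤ) - (j : ℤ)).natAbs ≤ 1) ∧
    (∀ i j : Fin n, ‖(e i : V)‖ = ‖(e j : V)‖)

/-- all roots have the same length -/
def SimplyLaced : Prop := ∀ α ∈ R.pos, ∀ β ∈ R.pos, ‖α‖ = ‖β‖

/-- a positive root `γ` is commutative if the upper ideal it generates is abelian,
i.e. no two of its elements sum to a root -/
def IsCom (γ : V) : Prop :=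
  ∀ ν₁ ∈ R.pos, ∀ ν₂ ∈ R.pos, R.rle γ ν₁ → R.rle γ ν₂ →
    ν₁ + ν₂ ∉ R.pos ∧ -(ν₁ + ν₂) ∉ R.pos

/-- the coefficientwise floor `⌊θ/2⌋` of half the highest root -/
def floorTheta : V := ∑ α ∈ R.simple, ((R.coeff R.highest α / 2 : ℕ) : ℝ) • α

end SimpleRS

/-!
Distinct simple roots satisfy `⟪α, β⟫ ≤ 0`, because `α - β` is never a root. If
`⟪γ + α, β⟫ < 0` (or `⟪γ + β, α⟫ < 0`), adding the second simple root to a root again gives a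
root. Otherwise `⟪γ + α, γ + β⟫ = ‖γ‖² + ⟪γ + α, β⟫ + ⟪γ + β, α⟫ - ⟪α, β⟫ > 0`, which forces the
difference `α - β` of the two roots `γ + α` and `γ + β` to be a root, a contradiction.
-/

section CartanInteger

variable {V : Type*} [NormedAddCommGroup V] [InnerProductSpace ℝ V]

/-- Both Cartan numbers are positive integers with product at most `4` by Cauchy–Schwarz, with
equality only for `x = y`. -/
theorem two_inner_div_eq_one_or_of_inner_pos {x y : V} (hxy : x ≠ y) (h : 0 < ⟪x, y⟫)
    (hm : ∃ m : ℤ, 2 * ⟪x, y⟫ / ⟪y, y⟫ = m) (hn : ∃ n : ℤ, 2 * ⟪y, x⟫ / ⟪x, x⟫ = n) :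
    2 * ⟪x, y⟫ / ⟪y, y⟫ = 1 ∨ 2 * ⟪y, x⟫ / ⟪x, x⟫ = 1 := by
  obtain ⟨m, hm⟩ := hm
  obtain ⟨n, hn⟩ := hn
  have hx : 0 < ⟪x, x⟫ := real_inner_self_pos.2 fun hx ↦ by simp [hx] at h
  have hy : 0 < ⟪y, y⟫ := real_inner_self_pos.2 fun hy ↦ by simp [hy] at h
  rw [hm, hn]
  rw [div_eq_iff hy.ne'] at hm
  rw [real_inner_comm, div_eq_iff hx.ne'] at hn
  have hm_pos : 0 < m := by exact_mod_cast (show (0 : ℝ) < m by nlinarith)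
  have hn_pos : 0 < n := by exact_mod_cast (show (0 : ℝ) < n by nlinarith)
  have hmn : m * n ≤ 4 := by
    have := real_inner_mul_inner_self_le x y
    exact_mod_cast (show (m : ℝ) * n ≤ 4 by nlinarith [mul_pos hx hy])
  by_contra hne
  obtain ⟨hm1, hn1⟩ := not_or.1 hne
  norm_cast at hm1 hn1
  obtain ⟨rfl, rfl⟩ : m = 2 ∧ n = 2 := by
    have : 2 ≤ m := by omega
    have : 2 ≤ n := by omega
    constructor <;> nlinarith
  have : ⟪x - y, x - y⟫ = 0 := by
    rw [real_inner_sub_sub_self]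
    push_cast at hm hn
    linarith
  exact hxy (sub_eq_zero.1 (inner_self_eq_zero.1 this))

end CartanInteger

namespace SimpleRS

variable {V : Type*} [NormedAddCommGroup V] [InnerProductSpace ℝ V] (R : SimpleRS V)

theorem eq_zero_of_sum_smul_eq_zero {f : V → ℝ} (h : ∑ a ∈ R.simple, f a • a = 0) :
    ∀ a ∈ R.simple, f a = 0 := fun a ha ↦
  Fintype.linearIndependent_iff.1 R.indep (fun i ↦ f i)
    (by rwa [Finset.sum_coe_sort R.simple fun a ↦ f a • a]) ⟨a, ha⟩

theorem rle_zero_of_mem_pos {γ : V} (hγ : γ ∈ R.pos) : R.rle 0 γ :=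
  ⟨R.coeff γ, by rw [sub_zero, ← R.coeff_spec γ hγ]⟩

theorem rle_zero_add {u v : V} (hu : R.rle 0 u) (hv : R.rle 0 v) : R.rle 0 (u + v) := by
  obtain ⟨c, hc⟩ := hu
  obtain ⟨d, hd⟩ := hv
  refine ⟨c + d, ?_⟩
  simp only [sub_zero] at hc hd ⊢
  simp only [Pi.add_apply, Nat.cast_add, add_smul, Finset.sum_add_distrib, hc, hd]

theorem eq_zero_of_rle_zero_of_rle_zero_neg {v : V} (hv : R.rle 0 v) (hnv : R.rle 0 (-v)) :
    v = 0 := by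
  obtain ⟨c, hc⟩ := hv
  obtain ⟨d, hd⟩ := hnv
  rw [sub_zero] at hc hd
  have hsum : ∑ a ∈ R.simple, ((c a : ℝ) + d a) • a = 0 := by
    rw [Finset.sum_congr rfl fun a _ ↦ add_smul _ _ a, Finset.sum_add_distrib, ← hc, ← hd,
      add_neg_cancel]
  rw [hc]
  refine Finset.sum_eq_zero fun a ha ↦ ?_
  have hca : c a + d a = 0 := by exact_mod_cast R.eq_zero_of_sum_smul_eq_zero hsum a ha
  rw [show c a = 0 by omega, Nat.cast_zero, zero_smul]

theorem neg_notMem_pos {γ : V} (hγ : γ ∈ R.pos) : -γ ∉ R.pos := fun h ↦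
  R.root_ne γ hγ <|
    R.eq_zero_of_rle_zero_of_rle_zero_neg (R.rle_zero_of_mem_pos hγ) (R.rle_zero_of_mem_pos h)

theorem neg_add_notMem_pos {x y : V} (hx : x ∈ R.pos) (hy : y ∈ R.pos) : -(x + y) ∉ R.pos :=
  fun h ↦ by
    have hxy := R.eq_zero_of_rle_zero_of_rle_zero_neg
      (R.rle_zero_add (R.rle_zero_of_mem_pos hx) (R.rle_zero_of_mem_pos hy))
      (R.rle_zero_of_mem_pos h)
    rw [eq_neg_of_add_eq_zero_right hxy] at hy
    exact R.neg_notMem_pos hx hy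

theorem add_mem_pos_of_two_inner_div_eq_neg_one {μ δ : V} (hμ : μ ∈ R.pos) (hδ : δ ∈ R.pos)
    (hc : 2 * ⟪μ, δ⟫ / ⟪δ, δ⟫ = -1) : μ + δ ∈ R.pos := by
  rcases R.reflect_mem δ hδ μ hμ with hr | hr <;> rw [hc, neg_one_smul, sub_neg_eq_add] at hr
  · exact hr
  · exact absurd hr (R.neg_add_notMem_pos hμ hδ)

theorem sub_mem_pos_or_of_two_inner_div_eq_one {μ δ : V} (hμ : μ ∈ R.pos) (hδ : δ ∈ R.pos)
    (hc : 2 * ⟪μ, δ⟫ / ⟪δ, δ⟫ = 1) : μ - δ ∈ R.pos ∨ δ - μ ∈ R.pos := by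
  simpa only [hc, one_smul, neg_sub] using R.reflect_mem δ hδ μ hμ

theorem add_mem_pos_of_inner_neg {μ δ : V} (hμ : μ ∈ R.pos) (hδ : δ ∈ R.pos)
    (h : ⟪μ, δ⟫ < 0) : μ + δ ∈ R.pos := by
  have hne : μ ≠ -δ := by rintro rfl; exact R.neg_notMem_pos hδ hμ
  have hneg {c : ℝ} : (∃ z : ℤ, c = z) → ∃ z : ℤ, -c = z := fun ⟨z, hz⟩ ↦ ⟨-z, by simp [hz]⟩
  rcases two_inner_div_eq_one_or_of_inner_pos hne (by rwa [inner_neg_right, neg_pos])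
    (by simpa only [inner_neg_right, inner_neg_left, neg_neg, mul_neg, neg_div]
      using hneg (R.crystallographic δ hδ μ hμ))
    (by simpa only [inner_neg_left, mul_neg, neg_div] using hneg (R.crystallographic μ hμ δ hδ))
    with hc | hc
  · rw [inner_neg_right, inner_neg_neg, mul_neg, neg_div, neg_eq_iff_eq_neg] at hc
    exact R.add_mem_pos_of_two_inner_div_eq_neg_one hμ hδ hc
  · rw [inner_neg_left, mul_neg, neg_div, neg_eq_iff_eq_neg] at hc
    exact add_comm δ μ ▸ R.add_mem_pos_of_two_inner_div_eq_neg_one hδ hμ hc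

theorem sub_mem_pos_or_of_inner_pos {μ δ : V} (hμ : μ ∈ R.pos) (hδ : δ ∈ R.pos) (hne : μ ≠ δ)
    (h : 0 < ⟪μ, δ⟫) : μ - δ ∈ R.pos ∨ δ - μ ∈ R.pos := by
  rcases two_inner_div_eq_one_or_of_inner_pos hne h (R.crystallographic δ hδ μ hμ)
    (R.crystallographic μ hμ δ hδ) with hc | hc
  · exact R.sub_mem_pos_or_of_two_inner_div_eq_one hμ hδ hc
  · exact (R.sub_mem_pos_or_of_two_inner_div_eq_one hδ hμ hc).symm

theorem sub_notMem_pos_of_mem_simple {α β : V} (hα : α ∈ R.simple) (hβ : β ∈ R.simple)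
    (hne : α ≠ β) : α - β ∉ R.pos := by
  classical
  intro h
  obtain ⟨c, hc⟩ := R.rle_zero_of_mem_pos h
  rw [sub_zero] at hc
  have hsum : ∑ a ∈ R.simple,
      ((if a = α then 1 else 0) - (if a = β then 1 else 0) - (c a : ℝ)) • a = 0 := by
    simp only [sub_smul, Finset.sum_sub_distrib, ite_smul, one_smul, zero_smul,
      Finset.sum_ite_eq', hα, hβ, if_true, ← hc, sub_self]
  have hβ_coeff := R.eq_zero_of_sum_smul_eq_zero hsum β hβ
  simp only [if_neg hne.symm, if_true] at hβ_coeff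
  linarith [(c β).cast_nonneg (α := ℝ)]

theorem inner_nonpos_of_mem_simple {α β : V} (hα : α ∈ R.simple) (hβ : β ∈ R.simple)
    (hne : α ≠ β) : ⟪α, β⟫ ≤ 0 := by
  by_contra! h
  rcases R.sub_mem_pos_or_of_inner_pos (R.simple_sub hα) (R.simple_sub hβ) hne h with hd | hd
  · exact R.sub_notMem_pos_of_mem_simple hα hβ hne hd
  · exact R.sub_notMem_pos_of_mem_simple hβ hα hne.symm hd

end SimpleRS

/-- if `γ + α` and `γ + β` are positive roots for distinct simple
roots `α, β`, then so is `γ + α + β`. -/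
theorem stmt1 {V : Type*} [NormedAddCommGroup V] [InnerProductSpace ℝ V]
    (R : SimpleRS V) {γ α β : V} (hγ : γ ∈ R.pos)
    (hα : α ∈ R.simple) (hβ : β ∈ R.simple) (hαβ : α ≠ β)
    (h1 : γ + α ∈ R.pos) (h2 : γ + β ∈ R.pos) :
    γ + α + β ∈ R.pos := by
  by_cases hA : ⟪γ + α, β⟫ < 0
  · exact R.add_mem_pos_of_inner_neg h1 (R.simple_sub hβ) hA
  by_cases hB : ⟪γ + β, α⟫ < 0
  · rw [add_right_comm]
    exact R.add_mem_pos_of_inner_neg h2 (R.simple_sub hα) hB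
  exfalso
  have hγγ : 0 < ⟪γ, γ⟫ := real_inner_self_pos.2 (R.root_ne γ hγ)
  have hαβ_inner := R.inner_nonpos_of_mem_simple hα hβ hαβ
  have hpos : 0 < ⟪γ + α, γ + β⟫ := by
    simp only [not_lt, inner_add_left, inner_add_right, real_inner_comm] at hA hB ⊢
    linarith
  have hne : γ + α ≠ γ + β := fun h ↦ hαβ (add_left_cancel h)
  rcases R.sub_mem_pos_or_of_inner_pos h1 h2 hne hpos with hd | hd
  · exact R.sub_notMem_pos_of_mem_simple hα hβ hαβ (by rwa [add_sub_add_left_eq_sub] at hd)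
  · exact R.sub_notMem_pos_of_mem_simple hβ hα hαβ.symm (by rwa [add_sub_add_left_eq_sub] at hd)
end

section
/- For any positive root γ of a simple root system, the upper ideal I⟨≽γ⟩ = {ν ∈ Δ⁺ : ν ≽ γ} is a lattice under the root order: any two elements of I⟨≽γ⟩ have a least upper bound and a greatest lower bound within I⟨≽γ⟩. -/
open scoped RealInnerProductSpace

/-!
The join of two positive roots `η₁, η₂` is the unique minimal element of the set `P` of positive
roots lying above both. Stepping down by a simple root inside `P` is a confluent relation: if
`x - α` and `x - β` lie in `P` (with `α ≠ β` simple), then `x - α - β` is a root by the usual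
root-string arguments, positive because it still lies above `η₁`, hence again in `P`. Every
element of `P` is reached from the highest root by such steps, so by Church–Rosser all minimal
elements of `P` coincide. Inside `I⟨≽γ⟩` the meet of `η₁, η₂` is then the common lower bound of
maximal height, since its join with any other common lower bound is again one.
-/

namespace SimpleRS

variable {V : Type*} [NormedAddCommGroup V] [InnerProductSpace ℝ V] (R : SimpleRS V)

open scoped Classical

def IsRoot (x : V) : Prop := x ∈ R.pos ∨ -x ∈ R.pos

variable {R} in
lemma IsRoot.neg {x : V} (h : R.IsRoot x) : R.IsRoot (-x) := by
  rw [IsRoot, neg_neg]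
  exact h.symm

def comb (c : V → ℝ) : V := ∑ α ∈ R.simple, c α • α

lemma rle_iff {μ ν : V} : R.rle μ ν ↔ ∃ c : V → ℕ, ν - μ = R.comb fun α => c α := Iff.rfl

lemma eq_comb_coeff {γ : V} (hγ : γ ∈ R.pos) : γ = R.comb fun α => R.coeff γ α :=
  R.coeff_spec γ hγ

lemma comb_add (c d : V → ℝ) : R.comb (fun α => c α + d α) = R.comb c + R.comb d := by
  simp only [comb, add_smul, Finset.sum_add_distrib]

lemma comb_smul (a : ℝ) (c : V → ℝ) : R.comb (fun α => a * c α) = a • R.comb c := by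
  simp only [comb, Finset.smul_sum, smul_smul]

lemma comb_zero : R.comb (fun _ => 0) = 0 := by
  simp only [comb, zero_smul, Finset.sum_const_zero]

lemma comb_ite {α : V} (hα : α ∈ R.simple) : R.comb (fun β => if β = α then 1 else 0) = α := by
  simp only [comb, ite_smul, one_smul, zero_smul, Finset.sum_ite_eq', if_pos hα]

lemma comb_add_ite (c : V → ℝ) {α : V} (hα : α ∈ R.simple) :
    R.comb (fun β => c β + if β = α then 1 else 0) = R.comb c + α := by
  rw [comb_add, comb_ite R hα]

lemma eq_of_comb_eq {c d : V → ℝ} (h : R.comb c = R.comb d) : ∀ α ∈ R.simple, c α = d α := by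
  intro α hα
  have hsum : ∑ i ∈ R.simple.attach, (c i - d i) • (i : V) = 0 := by
    rw [Finset.sum_attach R.simple fun α => (c α - d α) • α]
    simpa only [comb, sub_smul, Finset.sum_sub_distrib, sub_eq_zero] using h
  exact sub_eq_zero.mp <|
    linearIndependent_iff'.mp R.indep _ _ hsum ⟨α, hα⟩ (Finset.mem_attach _ _)

lemma rle_refl (μ : V) : R.rle μ μ := ⟨fun _ => 0, by simp⟩

lemma rle_trans {μ ν ρ : V} (h₁ : R.rle μ ν) (h₂ : R.rle ν ρ) : R.rle μ ρ := by
  obtain ⟨c, hc⟩ := R.rle_iff.mp h₁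
  obtain ⟨d, hd⟩ := R.rle_iff.mp h₂
  refine R.rle_iff.mpr ⟨fun α => c α + d α, ?_⟩
  simp only [Nat.cast_add]
  rw [comb_add, ← hc, ← hd]
  abel

lemma rle_sub_iff {μ ν α : V} : R.rle μ (ν - α) ↔ R.rle (μ + α) ν := by
  rw [rle, rle, sub_sub, add_comm]

lemma rle_add_right {q : V} (hq : q ∈ R.pos) (p : V) : R.rle p (p + q) :=
  ⟨R.coeff q, by rw [add_sub_cancel_left]; exact R.eq_comb_coeff hq⟩

lemma rle_add_simple_of_ne_zero {μ ν α : V} (hα : α ∈ R.simple) {c : V → ℕ}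
    (hc : ν - μ = R.comb fun β => c β) (hcα : c α ≠ 0) : R.rle (μ + α) ν := by
  refine R.rle_iff.mpr ⟨fun β => c β - if β = α then 1 else 0, ?_⟩
  have hcast : (fun β => ((c β - if β = α then 1 else 0 : ℕ) : ℝ) + if β = α then 1 else 0) =
      fun β => (c β : ℝ) := by
    ext β
    split_ifs with h
    · subst h
      rw [Nat.cast_sub (by omega), Nat.cast_one, sub_add_cancel]
    · simp
  have := R.comb_add_ite (fun β => ((c β - if β = α then 1 else 0 : ℕ) : ℝ)) hα
  rw [hcast, ← hc] at this
  rw [eq_sub_of_add_eq this.symm]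
  abel

lemma add_comb_ne_zero {μ : V} (hμ : μ ∈ R.pos) {c : V → ℝ} (hc : ∀ α ∈ R.simple, 0 ≤ c α) :
    μ + R.comb c ≠ 0 := by
  intro h
  rw [R.eq_comb_coeff hμ, ← comb_add, ← R.comb_zero] at h
  have hcoeff := R.eq_of_comb_eq h
  apply R.root_ne μ hμ
  rw [R.eq_comb_coeff hμ, comb]
  refine Finset.sum_eq_zero fun α hα => ?_
  have hzero : (R.coeff μ α : ℝ) = 0 := by
    linarith [hcoeff α hα, hc α hα, Nat.cast_nonneg (α := ℝ) (R.coeff μ α)]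
  rw [hzero, zero_smul]

lemma ne_zero_of_rle {μ ν : V} (hμ : μ ∈ R.pos) (h : R.rle μ ν) : ν ≠ 0 := by
  obtain ⟨c, hc⟩ := R.rle_iff.mp h
  rw [← sub_add_cancel ν μ, hc, add_comm]
  exact R.add_comb_ne_zero hμ fun α _ => Nat.cast_nonneg _

lemma mem_pos_of_rle {μ ν : V} (hμ : μ ∈ R.pos) (h : R.rle μ ν) (hν : R.IsRoot ν) :
    ν ∈ R.pos := by
  refine hν.resolve_right fun hneg => ?_
  obtain ⟨c, hc⟩ := R.rle_iff.mp h
  apply R.add_comb_ne_zero hneg (c := fun α => R.coeff μ α + c α) fun α _ => by positivity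
  rw [comb_add, ← R.eq_comb_coeff hμ, ← hc]
  abel

lemma coeff_le_of_rle {μ ν : V} (hμ : μ ∈ R.pos) (hν : ν ∈ R.pos) (h : R.rle μ ν) :
    ∀ α ∈ R.simple, R.coeff μ α ≤ R.coeff ν α := by
  obtain ⟨c, hc⟩ := R.rle_iff.mp h
  have hsum : (R.comb fun α => R.coeff ν α) = R.comb fun α => (R.coeff μ α : ℝ) + c α := by
    rw [comb_add, ← R.eq_comb_coeff hμ, ← R.eq_comb_coeff hν, ← hc, add_sub_cancel]
  intro α hα
  have := R.eq_of_comb_eq hsum α hα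
  exact_mod_cast this ▸ le_add_of_nonneg_right (Nat.cast_nonneg (c α))

lemma ht_lt_of_rle {μ ν : V} (hμ : μ ∈ R.pos) (hν : ν ∈ R.pos) (h : R.rle μ ν) (hne : μ ≠ ν) :
    R.ht μ < R.ht ν := by
  have hle := R.coeff_le_of_rle hμ hν h
  refine Finset.sum_lt_sum hle ?_
  by_contra! hge
  apply hne
  rw [R.eq_comb_coeff hμ, R.eq_comb_coeff hν, comb, comb]
  refine Finset.sum_congr rfl fun α hα => ?_
  rw [le_antisymm (hle α hα) (hge α hα)]

lemma exists_simple_inner_pos {c : V → ℕ} {x : V} (h : 0 < ⟪R.comb (fun α => c α), x⟫) :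
    ∃ α ∈ R.simple, c α ≠ 0 ∧ 0 < ⟪α, x⟫ := by
  rw [comb, sum_inner] at h
  obtain ⟨α, hα, hpos⟩ := Finset.exists_lt_of_sum_lt (f := fun _ => (0 : ℝ))
    (by simpa using h)
  rw [real_inner_smul_left] at hpos
  refine ⟨α, hα, fun h0 => by simp [h0] at hpos, pos_of_mul_pos_right hpos (Nat.cast_nonneg _)⟩

lemma pos_of_smul_mem_pos {p : V} (hp : p ∈ R.pos) {r : ℝ} (hr : r • p ∈ R.pos) : 0 < r := by
  by_contra! hr0
  apply R.add_comb_ne_zero hr (c := fun α => -r * R.coeff p α) fun α _ => by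
    have := Nat.cast_nonneg (α := ℝ) (R.coeff p α)
    nlinarith
  rw [comb_smul, ← R.eq_comb_coeff hp, neg_smul, add_neg_cancel]

lemma eq_one_of_smul_mem_pos {p : V} (hp : p ∈ R.pos) {r : ℝ} (hr : r • p ∈ R.pos) : r = 1 := by
  have hr0 := R.pos_of_smul_mem_pos hp hr
  have hpp : ⟪p, p⟫ ≠ 0 := (real_inner_self_pos.mpr (R.root_ne p hp)).ne'
  -- the Cartan integers of `p` and `r • p` are `2 * r` and `2 / r`
  obtain ⟨n, hn⟩ := R.crystallographic p hp (r • p) hr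
  obtain ⟨k, hk⟩ := R.crystallographic (r • p) hr p hp
  simp only [real_inner_smul_left, real_inner_smul_right] at hn hk
  have hnr : (n : ℝ) = 2 * r := by rw [← hn]; field_simp
  have hkr : (k : ℝ) * r = 2 := by rw [← hk]; field_simp
  have hnk : n * k = 4 := by
    have : (n : ℝ) * k = 4 := by rw [hnr]; linear_combination 2 * hkr
    exact_mod_cast this
  have hn0 : 0 < n := by exact_mod_cast hnr ▸ (by positivity : (0 : ℝ) < 2 * r)
  have hk0 : 0 < k := by
    have : (0 : ℝ) < k := pos_of_mul_pos_left (hkr ▸ two_pos) hr0.le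
    exact_mod_cast this
  have hn4 : n ≤ 4 := by nlinarith
  interval_cases n
  · exfalso
    apply R.reduced (r • p) hr
    rw [smul_smul, show 2 * r = 1 by push_cast at hnr; linarith, one_smul]
    exact hp
  · push_cast at hnr; linarith
  · omega
  · exfalso
    apply R.reduced p hp
    rwa [show (2 : ℝ) = r by push_cast at hnr; linarith]

lemma inner_mul_inner_lt {p q : V} (hp : p ∈ R.pos) (hq : q ∈ R.pos) (hpq : p ≠ q) :
    ⟪p, q⟫ * ⟪p, q⟫ < ⟪p, p⟫ * ⟪q, q⟫ := by
  refine (real_inner_mul_inner_self_le p q).lt_of_ne fun heq => hpq ?_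
  have hnorm : ‖⟪p, q⟫‖ = ‖p‖ * ‖q‖ := by
    rw [Real.norm_eq_abs, ← sq_eq_sq₀ (abs_nonneg _) (by positivity), sq_abs, mul_pow,
      ← real_inner_self_eq_norm_sq, ← real_inner_self_eq_norm_sq, sq, heq]
  obtain ⟨r, -, rfl⟩ := (norm_inner_eq_norm_iff (R.root_ne p hp) (R.root_ne _ hq)).mp hnorm
  rw [R.eq_one_of_smul_mem_pos hp hq, one_smul]

lemma exists_cartan_integers_mul_lt_four {p q : V} (hp : p ∈ R.pos) (hq : q ∈ R.pos) (hpq : p ≠ q) :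
    ∃ z w : ℤ, 2 * ⟪p, q⟫ / ⟪q, q⟫ = z ∧ 2 * ⟪q, p⟫ / ⟪p, p⟫ = w ∧ z * w < 4 := by
  obtain ⟨z, hz⟩ := R.crystallographic q hq p hp
  obtain ⟨w, hw⟩ := R.crystallographic p hp q hq
  refine ⟨z, w, hz, hw, ?_⟩
  have hpp := real_inner_self_pos.mpr (R.root_ne p hp)
  have hqq := real_inner_self_pos.mpr (R.root_ne q hq)
  have : (z : ℝ) * w < 4 := by
    rw [← hz, ← hw, real_inner_comm p q, div_mul_div_comm, div_lt_iff₀ (by positivity)]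
    nlinarith [R.inner_mul_inner_lt hp hq hpq]
  exact_mod_cast this

lemma isRoot_sub_of_inner_pos {p q : V} (hp : p ∈ R.pos) (hq : q ∈ R.pos) (hpq : p ≠ q)
    (h : 0 < ⟪p, q⟫) : R.IsRoot (p - q) := by
  obtain ⟨z, w, hz, hw, hzw⟩ := R.exists_cartan_integers_mul_lt_four hp hq hpq
  have hpp := real_inner_self_pos.mpr (R.root_ne p hp)
  have hqq := real_inner_self_pos.mpr (R.root_ne q hq)
  have hz0 : 0 < z := by exact_mod_cast hz ▸ (by positivity : 0 < 2 * ⟪p, q⟫ / ⟪q, q⟫)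
  have hw0 : 0 < w := by
    exact_mod_cast hw ▸ (by rw [real_inner_comm]; positivity : 0 < 2 * ⟪q, p⟫ / ⟪p, p⟫)
  have : z = 1 ∨ w = 1 := by
    by_contra! hne
    nlinarith [show 2 ≤ z by omega, show 2 ≤ w by omega]
  rcases this with rfl | rfl
  · have := R.reflect_mem q hq p hp
    rwa [hz, Int.cast_one, one_smul] at this
  · have : R.IsRoot (q - p) := by
      have := R.reflect_mem p hp q hq
      rwa [hw, Int.cast_one, one_smul] at this
    simpa only [neg_sub] using this.neg

lemma add_mem_pos_of_inner_neg_s4 {p q : V} (hp : p ∈ R.pos) (hq : q ∈ R.pos) (h : ⟪p, q⟫ < 0) :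
    p + q ∈ R.pos := by
  have hpq : p ≠ q := by
    rintro rfl
    exact (real_inner_self_nonneg (x := p)).not_gt h
  obtain ⟨z, w, hz, hw, hzw⟩ := R.exists_cartan_integers_mul_lt_four hp hq hpq
  have hpp := real_inner_self_pos.mpr (R.root_ne p hp)
  have hqq := real_inner_self_pos.mpr (R.root_ne q hq)
  have hz0 : z < 0 := by
    exact_mod_cast hz ▸ (div_neg_of_neg_of_pos (by linarith) hqq : 2 * ⟪p, q⟫ / ⟪q, q⟫ < 0)
  have hw0 : w < 0 := by
    rw [real_inner_comm] at hw
    exact_mod_cast hw ▸ (div_neg_of_neg_of_pos (by linarith) hpp : 2 * ⟪p, q⟫ / ⟪p, p⟫ < 0)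
  refine R.mem_pos_of_rle hp (R.rle_add_right hq p) ?_
  have : z = -1 ∨ w = -1 := by
    by_contra! hne
    nlinarith [show z ≤ -2 by omega, show w ≤ -2 by omega]
  rcases this with rfl | rfl
  · have := R.reflect_mem q hq p hp
    rwa [hz, Int.cast_neg, Int.cast_one, neg_one_smul, sub_neg_eq_add] at this
  · have := R.reflect_mem p hp q hq
    rwa [hw, Int.cast_neg, Int.cast_one, neg_one_smul, sub_neg_eq_add, add_comm] at this

lemma sub_simple_not_mem_pos {α β : V} (hα : α ∈ R.simple) (hβ : β ∈ R.simple) (hab : α ≠ β) :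
    α - β ∉ R.pos := by
  intro hmem
  have hsum : (R.comb fun γ => (R.coeff (α - β) γ : ℝ) + if γ = β then 1 else 0) =
      R.comb fun γ => if γ = α then 1 else 0 := by
    rw [comb_add_ite _ _ hβ, comb_ite _ hα, ← R.eq_comb_coeff hmem, sub_add_cancel]
  have := R.eq_of_comb_eq hsum β hβ
  rw [if_pos rfl, if_neg hab.symm] at this
  linarith [Nat.cast_nonneg (α := ℝ) (R.coeff (α - β) β)]

lemma not_isRoot_sub_simple {α β : V} (hα : α ∈ R.simple) (hβ : β ∈ R.simple) (hab : α ≠ β) :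
    ¬ R.IsRoot (α - β) := by
  rintro (h | h)
  · exact R.sub_simple_not_mem_pos hα hβ hab h
  · exact R.sub_simple_not_mem_pos hβ hα hab.symm (by rwa [neg_sub] at h)

lemma inner_simple_nonpos {α β : V} (hα : α ∈ R.simple) (hβ : β ∈ R.simple) (hab : α ≠ β) :
    ⟪α, β⟫ ≤ 0 := by
  by_contra! h
  exact R.not_isRoot_sub_simple hα hβ hab <|
    R.isRoot_sub_of_inner_pos (R.simple_sub hα) (R.simple_sub hβ) hab h

lemma isRoot_sub_sub_simple {x α β : V} (hα : α ∈ R.simple) (hβ : β ∈ R.simple) (hab : α ≠ β)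
    (h₁ : x - α ∈ R.pos) (h₂ : x - β ∈ R.pos) (hz : x - α - β ≠ 0) :
    R.IsRoot (x - α - β) := by
  by_cases hα₂ : 0 < ⟪x - β, α⟫
  · have hne : x - β ≠ α := fun h => hz (by rw [← h]; abel)
    simpa only [sub_right_comm] using
      R.isRoot_sub_of_inner_pos h₂ (R.simple_sub hα) hne hα₂
  by_cases hβ₁ : 0 < ⟪x - α, β⟫
  · have hne : x - α ≠ β := fun h => hz (by rw [← h]; abel)
    exact R.isRoot_sub_of_inner_pos h₁ (R.simple_sub hβ) hne hβ₁
  -- otherwise `x - α` and `x - β` make an acute angle, so `β - α` would be a root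
  exfalso
  have hx : 0 < ⟪x, x⟫ := by
    refine real_inner_self_pos.mpr (R.ne_zero_of_rle h₁ ?_)
    simpa using R.rle_add_right (R.simple_sub hα) (x - α)
  have hαβ := R.inner_simple_nonpos hα hβ hab
  have hacute : 0 < ⟪x - α, x - β⟫ := by
    simp only [inner_sub_left, inner_sub_right, real_inner_comm α β, real_inner_comm x α]
      at hα₂ hβ₁ ⊢
    linarith
  have hne : x - α ≠ x - β := fun h => hab (sub_right_injective h)
  apply R.not_isRoot_sub_simple hβ hα hab.symm
  simpa using R.isRoot_sub_of_inner_pos h₁ h₂ hne hacute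

lemma rle_sub_simple {η y₁ y₂ α β : V} (hα : α ∈ R.simple) (hβ : β ∈ R.simple) (hab : α ≠ β)
    (hy : y₁ + α = y₂ + β) (h₁ : R.rle η y₁) (h₂ : R.rle η y₂) : R.rle η (y₁ - β) := by
  obtain ⟨c₁, hc₁⟩ := R.rle_iff.mp h₁
  obtain ⟨c₂, hc₂⟩ := R.rle_iff.mp h₂
  have hsum : (R.comb fun γ => (c₁ γ : ℝ) + if γ = α then 1 else 0) =
      R.comb fun γ => (c₂ γ : ℝ) + if γ = β then 1 else 0 := by
    rw [comb_add_ite _ _ hα, comb_add_ite _ _ hβ, ← hc₁, ← hc₂, sub_add_eq_add_sub, hy,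
      sub_add_eq_add_sub]
  have := R.eq_of_comb_eq hsum β hβ
  rw [if_pos rfl, if_neg hab.symm, add_zero] at this
  have hc₁β : c₁ β ≠ 0 := by
    intro h0
    rw [h0, Nat.cast_zero] at this
    linarith [Nat.cast_nonneg (α := ℝ) (c₂ β)]
  exact R.rle_sub_iff.mpr (R.rle_add_simple_of_ne_zero hβ hc₁ hc₁β)

def StepDown (P : V → Prop) (x y : V) : Prop := P y ∧ ∃ α ∈ R.simple, x = y + α

lemma reflTransGen_stepDown_of_rle {μ ζ : V} (hμ : μ ∈ R.pos) (hζ : ζ ∈ R.pos)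
    (h : R.rle μ ζ) :
    Relation.ReflTransGen (R.StepDown fun y => y ∈ R.pos ∧ R.rle μ y) ζ μ := by
  induction hn : R.ht ζ - R.ht μ using Nat.strong_induction_on generalizing μ ζ with
  | _ n ih =>
  rcases eq_or_ne ζ μ with rfl | hne
  · exact .refl
  have hlt := R.ht_lt_of_rle hμ hζ h hne.symm
  obtain ⟨c, hc⟩ := R.rle_iff.mp h
  -- as `0 < ⟪ζ - μ, ζ - μ⟫`, either some simple root can be removed from `ζ` or added to `μ`
  have hsplit : 0 < ⟪R.comb (fun α => c α), ζ⟫ ∨ 0 < ⟪R.comb (fun α => c α), -μ⟫ := by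
    have := real_inner_self_pos.mpr (sub_ne_zero.mpr hne)
    rw [inner_sub_right, hc] at this
    rw [inner_neg_right]
    by_contra! hle
    linarith [hle.1, hle.2]
  rcases hsplit with hζα | hμα
  · obtain ⟨α, hα, hcα, hαζ⟩ := R.exists_simple_inner_pos hζα
    have hrle : R.rle μ (ζ - α) := R.rle_sub_iff.mpr (R.rle_add_simple_of_ne_zero hα hc hcα)
    have hne' : ζ ≠ α := fun h => R.ne_zero_of_rle hμ hrle (sub_eq_zero.mpr h)
    have hpos : ζ - α ∈ R.pos := R.mem_pos_of_rle hμ hrle <|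
      R.isRoot_sub_of_inner_pos hζ (R.simple_sub hα) hne' (by rwa [real_inner_comm])
    have hlt' : R.ht (ζ - α) < R.ht ζ := by
      refine R.ht_lt_of_rle hpos hζ ?_ ?_
      · simpa using R.rle_add_right (R.simple_sub hα) (ζ - α)
      · simpa using R.root_ne α (R.simple_sub hα)
    exact .head ⟨⟨hpos, hrle⟩, α, hα, (sub_add_cancel ζ α).symm⟩
      (ih _ (by omega) hμ hpos hrle rfl)
  · obtain ⟨α, hα, hcα, hαμ⟩ := R.exists_simple_inner_pos hμα
    rw [inner_neg_right, neg_pos] at hαμ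
    have hpos : μ + α ∈ R.pos := add_comm α μ ▸ R.add_mem_pos_of_inner_neg_s4 (R.simple_sub hα) hμ hαμ
    have hμle : R.rle μ (μ + α) := R.rle_add_right (R.simple_sub hα) μ
    have hlt' : R.ht μ < R.ht (μ + α) :=
      R.ht_lt_of_rle hμ hpos hμle (by simpa using R.root_ne α (R.simple_sub hα))
    have hrec := ih _ (by omega) hpos hζ (R.rle_add_simple_of_ne_zero hα hc hcα) rfl
    refine .tail (Relation.ReflTransGen.mono (fun x y hxy => ?_) _ _ hrec)
      ⟨⟨hμ, R.rle_refl μ⟩, α, hα, rfl⟩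
    exact ⟨⟨hxy.1.1, R.rle_trans hμle hxy.1.2⟩, hxy.2⟩

def IsCommonUpper (η₁ η₂ t : V) : Prop := t ∈ R.pos ∧ R.rle η₁ t ∧ R.rle η₂ t

lemma stepDown_diamond {η₁ η₂ : V} (hη₁ : η₁ ∈ R.pos) {x y₁ y₂ : V}
    (h₁ : R.StepDown (R.IsCommonUpper η₁ η₂) x y₁)
    (h₂ : R.StepDown (R.IsCommonUpper η₁ η₂) x y₂) :
    ∃ d, Relation.ReflGen (R.StepDown (R.IsCommonUpper η₁ η₂)) y₁ d ∧
      Relation.ReflTransGen (R.StepDown (R.IsCommonUpper η₁ η₂)) y₂ d := by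
  obtain ⟨⟨hy₁, h₁₁, h₁₂⟩, α, hα, rfl⟩ := h₁
  obtain ⟨⟨hy₂, h₂₁, h₂₂⟩, β, hβ, hy⟩ := h₂
  rcases eq_or_ne α β with rfl | hab
  · obtain rfl := add_right_cancel hy
    exact ⟨y₁, .refl, .refl⟩
  have hz₁ := R.rle_sub_simple hα hβ hab hy h₁₁ h₂₁
  have hz₂ := R.rle_sub_simple hα hβ hab hy h₁₂ h₂₂
  have hy₂eq : y₂ = y₁ + α - β := eq_sub_of_add_eq hy.symm
  have hroot : R.IsRoot (y₁ - β) := by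
    have := R.isRoot_sub_sub_simple hα hβ hab (x := y₁ + α) (by simpa using hy₁)
      (hy₂eq ▸ hy₂) (by simpa using R.ne_zero_of_rle hη₁ hz₁)
    simpa using this
  have hz : R.IsCommonUpper η₁ η₂ (y₁ - β) := ⟨R.mem_pos_of_rle hη₁ hz₁ hroot, hz₁, hz₂⟩
  exact ⟨y₁ - β, .single ⟨hz, β, hβ, (sub_add_cancel y₁ β).symm⟩,
    .single ⟨hz, α, hα, by rw [hy₂eq]; abel⟩⟩

lemma eq_of_reflTransGen_stepDown {P : V → Prop} {m d : V}
    (hmin : ∀ y, P y → R.rle y m → y = m) (h : Relation.ReflTransGen (R.StepDown P) m d) :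
    d = m := by
  rcases h.cases_head with rfl | ⟨y, ⟨hy, α, hα, rfl⟩, -⟩
  · rfl
  · have := hmin y hy (R.rle_add_right (R.simple_sub hα) y)
    exact absurd (left_eq_add.mp this) (R.root_ne α (R.simple_sub hα))

lemma exists_minimal_rle (P : V → Prop) (hP : ∀ t, P t → t ∈ R.pos) {t : V} (ht : P t) :
    ∃ m, P m ∧ R.rle m t ∧ ∀ y, P y → R.rle y m → y = m := by
  obtain ⟨m, hm, hmin⟩ := Finset.exists_min_image (R.pos.filter fun y => P y ∧ R.rle y t) R.ht
    ⟨t, Finset.mem_filter.mpr ⟨hP t ht, ht, R.rle_refl t⟩⟩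
  obtain ⟨hmpos, hPm, hmt⟩ := Finset.mem_filter.mp hm
  refine ⟨m, hPm, hmt, fun y hy hym => ?_⟩
  by_contra hne
  have := hmin y (Finset.mem_filter.mpr ⟨hP y hy, hy, R.rle_trans hym hmt⟩)
  exact this.not_gt (R.ht_lt_of_rle (hP y hy) hmpos hym hne)

theorem exists_join {η₁ η₂ : V} (h₁ : η₁ ∈ R.pos) (h₂ : η₂ ∈ R.pos) :
    ∃ s, R.IsCommonUpper η₁ η₂ s ∧ ∀ t, R.IsCommonUpper η₁ η₂ t → R.rle s t := by
  set P := R.IsCommonUpper η₁ η₂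
  have hP : ∀ t, P t → t ∈ R.pos := fun t ht => ht.1
  have hchain : ∀ m, P m → Relation.ReflTransGen (R.StepDown P) R.highest m := fun m hm =>
    Relation.ReflTransGen.mono
      (fun _ _ hxy => ⟨⟨hxy.1.1, R.rle_trans hm.2.1 hxy.1.2, R.rle_trans hm.2.2 hxy.1.2⟩, hxy.2⟩)
      _ _ (R.reflTransGen_stepDown_of_rle hm.1 R.highest_mem (R.highest_spec m hm.1))
  have huniq : ∀ m m', P m → (∀ y, P y → R.rle y m → y = m) →
      P m' → (∀ y, P y → R.rle y m' → y = m') → m = m' := by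
    intro m m' hm hmin hm' hmin'
    obtain ⟨d, hd, hd'⟩ := Relation.church_rosser (fun _ _ _ => R.stepDown_diamond h₁)
      (hchain m hm) (hchain m' hm')
    rw [← R.eq_of_reflTransGen_stepDown hmin hd, R.eq_of_reflTransGen_stepDown hmin' hd']
  obtain ⟨s, hs, -, hsmin⟩ := R.exists_minimal_rle P hP
    (t := R.highest) ⟨R.highest_mem, R.highest_spec η₁ h₁, R.highest_spec η₂ h₂⟩
  refine ⟨s, hs, fun t ht => ?_⟩
  obtain ⟨m, hm, hmt, hmmin⟩ := R.exists_minimal_rle P hP ht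
  rwa [huniq s m hs hsmin hm hmmin]

theorem exists_meet_of_rle {γ η₁ η₂ : V} (hγ : γ ∈ R.pos) (h₁ : η₁ ∈ R.pos) (h₂ : η₂ ∈ R.pos)
    (hγ₁ : R.rle γ η₁) (hγ₂ : R.rle γ η₂) :
    ∃ m, (m ∈ R.pos ∧ R.rle γ m) ∧ R.rle m η₁ ∧ R.rle m η₂ ∧
      ∀ t, (t ∈ R.pos ∧ R.rle γ t) → R.rle t η₁ → R.rle t η₂ → R.rle t m := by
  set L := R.pos.filter fun t => R.rle γ t ∧ R.rle t η₁ ∧ R.rle t η₂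
  obtain ⟨m, hm, hmax⟩ := Finset.exists_max_image L R.ht
    ⟨γ, Finset.mem_filter.mpr ⟨hγ, R.rle_refl γ, hγ₁, hγ₂⟩⟩
  obtain ⟨hmpos, hγm, hm₁, hm₂⟩ := Finset.mem_filter.mp hm
  refine ⟨m, ⟨hmpos, hγm⟩, hm₁, hm₂, fun t ⟨htpos, hγt⟩ ht₁ ht₂ => ?_⟩
  obtain ⟨j, ⟨hjpos, htj, hmj⟩, hleast⟩ := R.exists_join htpos hmpos
  have hjL : j ∈ L := Finset.mem_filter.mpr ⟨hjpos, R.rle_trans hγm hmj,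
    hleast η₁ ⟨h₁, ht₁, hm₁⟩, hleast η₂ ⟨h₂, ht₂, hm₂⟩⟩
  by_contra hne
  have hmj' : m ≠ j := fun h => hne (h ▸ htj)
  exact (hmax j hjL).not_gt (R.ht_lt_of_rle hmpos hjpos hmj hmj')

end SimpleRS

/-- for any positive root `γ`, the upper ideal
`I⟨≽γ⟩ = {ν ∈ Δ⁺ : ν ≽ γ}` is a lattice under the root order: any two of its
elements have a least upper bound and a greatest lower bound within it. -/
theorem stmt4 {V : Type*} [NormedAddCommGroup V] [InnerProductSpace ℝ V]
    (R : SimpleRS V) {γ : V} (hγ : γ ∈ R.pos)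
    {η₁ η₂ : V} (h1 : η₁ ∈ R.pos) (h2 : η₂ ∈ R.pos)
    (hg1 : R.rle γ η₁) (hg2 : R.rle γ η₂) :
    (∃ s, (s ∈ R.pos ∧ R.rle γ s) ∧ R.rle η₁ s ∧ R.rle η₂ s ∧
        ∀ t, (t ∈ R.pos ∧ R.rle γ t) → R.rle η₁ t → R.rle η₂ t → R.rle s t) ∧
    (∃ m, (m ∈ R.pos ∧ R.rle γ m) ∧ R.rle m η₁ ∧ R.rle m η₂ ∧
        ∀ t, (t ∈ R.pos ∧ R.rle γ t) → R.rle t η₁ → R.rle t η₂ → R.rle t m) := by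
  obtain ⟨s, ⟨hs, hs₁, hs₂⟩, hleast⟩ := R.exists_join h1 h2
  exact ⟨⟨s, ⟨hs, R.rle_trans hg1 hs₁⟩, hs₁, hs₂, fun t ht ht₁ ht₂ => hleast t ⟨ht.1, ht₁, ht₂⟩⟩,
    R.exists_meet_of_rle hγ h1 h2 hg1 hg2⟩
end
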